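/- Let μ ≥ 0 be real, let G_c(μ) be the unique real root x > 1 of −3x³ + 4x² − μx + 2μ = 0, and set g_c(μ) = (G_c(μ) − 1)/(G_c(μ)²·(G_c(μ)² + μ)). Then for every real g with 0 ≤ g ≤ g_c(μ), the sum S = ∑_{n=0}^{∞} α_n(μ)·g^n satisfies the algebraic equation S = 1 + g·S²·(S² + μ). -/

import Mathlib

/-- `α_n(μ) = ∑_{q=0}^{n} μ^q/(3n − 2q + 1) · C(n,q) · C(4n − 2q, n)`, the
coefficient of `g^n` in the leading-order two-point function `G_LO(g, μ)`. -/
noncomputable def alphaCoeff (μ : ℝ) (n : ℕ) : ℝ :=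
  ∑ q ∈ Finset.range (n + 1),
    μ ^ q / (3 * (n : ℝ) - 2 * (q : ℝ) + 1) * (Nat.choose n q : ℝ) *
      (Nat.choose (4 * n - 2 * q) n : ℝ)

/-!
Let `T = T(x, y)` solve `T = 1 + x T⁴ + y T²`. Lagrange inversion gives `[x^m y^q] T^c` in closed
form, and `α_n(μ)` is the coefficient of `gⁿ` in `T(g, μ g)`. Instead of invoking Lagrange inversion
we check that the closed forms obey `T^(c+1) = T^c + x T^(c+4) + y T^(c+2)`; this recursion
determines the whole family from `T^0 = 1`, so the specialised series `F_c` satisfy `F_c = F_1^c`,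
and `F_1 = ∑ α_n Xⁿ` solves the Schwinger–Dyson equation formally. Its coefficients are
nonnegative, so for `0 ≤ g ≤ g_c` induction bounds the partial sums of `F_1(g)` by `G_c`, the fixed
point of `G ↦ 1 + g_c G²(G² + μ)`; the series converges absolutely, and Cauchy products carry the
formal equation over to its sum.
-/

open Finset PowerSeries
open scoped Nat

theorem sum_antidiagonal_succ_ite_fst {M : Type*} [AddCommMonoid M] (f : ℕ → ℕ → M) (n : ℕ) :
    ∑ p ∈ antidiagonal (n + 1), (if p.1 = 0 then 0 else f (p.1 - 1) p.2) =
      ∑ p ∈ antidiagonal n, f p.1 p.2 := by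
  simp [Nat.sum_antidiagonal_succ]

theorem sum_antidiagonal_succ_ite_snd {M : Type*} [AddCommMonoid M] (f : ℕ → ℕ → M) (n : ℕ) :
    ∑ p ∈ antidiagonal (n + 1), (if p.2 = 0 then 0 else f p.1 (p.2 - 1)) =
      ∑ p ∈ antidiagonal n, f p.1 p.2 := by
  simp [Nat.sum_antidiagonal_succ']

theorem sum_range_sum_antidiagonal_le {R : Type*} [CommSemiring R] [PartialOrder R]
    [IsOrderedRing R] {f h : ℕ → R} (hf : ∀ n, 0 ≤ f n) (hh : ∀ n, 0 ≤ h n)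
    (N : ℕ) : ∑ n ∈ range N, ∑ p ∈ antidiagonal n, f p.1 * h p.2 ≤
      (∑ n ∈ range N, f n) * ∑ n ∈ range N, h n := by
  simp only [Nat.sum_antidiagonal_eq_sum_range_succ (fun i j => f i * h j), Nat.succ_eq_add_one]
  rw [sum_range_diag_flip N (fun i j => f i * h j), sum_mul_sum]
  gcongr with i hi
  · exact fun j _ _ => mul_nonneg (hf i) (hh j)
  · exact Nat.sub_le N i

theorem PowerSeries.eq_zero_of_forall_eq_add_X_mul {R : Type*} [CommRing R] (a : R)
    (E : ℕ → PowerSeries R) (h0 : E 0 = 0)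
    (h : ∀ c, E (c + 1) = E c + X * (E (c + 4) + C a * E (c + 2))) (c : ℕ) : E c = 0 := by
  ext n
  rw [map_zero]
  induction n using Nat.strong_induction_on generalizing c with
  | _ n ih =>
    induction c with
    | zero => simp [h0]
    | succ c ihc =>
      rw [h, map_add, ihc, zero_add]
      rcases n with _ | n
      · exact coeff_zero_X_mul _
      · simp [coeff_succ_X_mul, ih n n.lt_succ_self]

theorem PowerSeries.coeff_mul_nonneg {R : Type*} [CommSemiring R] [PartialOrder R]
    [IsOrderedRing R] {F H : PowerSeries R} (hF : ∀ n, 0 ≤ coeff n F)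
    (hH : ∀ n, 0 ≤ coeff n H) (n : ℕ) : 0 ≤ coeff n (F * H) := by
  rw [coeff_mul]
  exact sum_nonneg fun p _ => mul_nonneg (hF p.1) (hH p.2)

theorem PowerSeries.coeff_mul_mul_pow {R : Type*} [CommSemiring R] (F H : PowerSeries R) (g : R)
    (n : ℕ) :
    coeff n (F * H) * g ^ n =
      ∑ p ∈ antidiagonal n, (coeff p.1 F * g ^ p.1) * (coeff p.2 H * g ^ p.2) := by
  rw [coeff_mul, sum_mul]
  refine sum_congr rfl fun p hp => ?_
  rw [← HasAntidiagonal.mem_antidiagonal.mp hp, pow_add]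
  ring

section

variable {F H : PowerSeries ℝ} {g : ℝ}

theorem PowerSeries.sum_range_coeff_mul_le (hF : ∀ n, 0 ≤ coeff n F) (hH : ∀ n, 0 ≤ coeff n H)
    (hg : 0 ≤ g) (N : ℕ) : ∑ n ∈ range N, coeff n (F * H) * g ^ n ≤
      (∑ n ∈ range N, coeff n F * g ^ n) * ∑ n ∈ range N, coeff n H * g ^ n := by
  simp only [coeff_mul_mul_pow]
  exact sum_range_sum_antidiagonal_le (fun n => mul_nonneg (hF n) (pow_nonneg hg n))
    (fun n => mul_nonneg (hH n) (pow_nonneg hg n)) N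

theorem PowerSeries.hasSum_coeff_mul (hF : ∀ n, 0 ≤ coeff n F) (hH : ∀ n, 0 ≤ coeff n H)
    (hg : 0 ≤ g) {s t : ℝ} (hs : HasSum (fun n => coeff n F * g ^ n) s)
    (ht : HasSum (fun n => coeff n H * g ^ n) t) :
    HasSum (fun n => coeff n (F * H) * g ^ n) (s * t) := by
  have norm_eq {K : PowerSeries ℝ} (hK : ∀ n, 0 ≤ coeff n K) :
      (fun n => ‖coeff n K * g ^ n‖) = fun n => coeff n K * g ^ n :=
    funext fun n => Real.norm_of_nonneg (mul_nonneg (hK n) (pow_nonneg hg n))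
  have hs' : Summable fun n => ‖coeff n F * g ^ n‖ := by rw [norm_eq hF]; exact hs.summable
  have ht' : Summable fun n => ‖coeff n H * g ^ n‖ := by rw [norm_eq hH]; exact ht.summable
  simp only [coeff_mul_mul_pow]
  rw [← hs.tsum_eq, ← ht.tsum_eq, tsum_mul_tsum_eq_tsum_sum_antidiagonal_of_summable_norm hs' ht']
  exact (summable_norm_sum_mul_antidiagonal_of_summable_norm hs' ht').of_norm.hasSum

theorem PowerSeries.hasSum_coeff_one_add_X_mul {s : ℝ}
    (hs : HasSum (fun n => coeff n F * g ^ n) s) :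
    HasSum (fun n => coeff n (1 + X * F) * g ^ n) (1 + g * s) := by
  rw [← hasSum_nat_add_iff' 1]
  simpa [coeff_succ_X_mul, coeff_one, pow_succ, mul_left_comm _ g, mul_comm _ g] using hs.mul_left g

end

section

variable {A : PowerSeries ℝ} {μ g : ℝ}

theorem PowerSeries.sum_range_coeff_le_of_eq_one_add_X_mul (hA : ∀ n, 0 ≤ coeff n A) (hμ : 0 ≤ μ)
    (hg : 0 ≤ g) {G : ℝ} (hG : 0 ≤ G) (hfix : 1 + g * (G ^ 4 + μ * G ^ 2) ≤ G)
    (hSD : A = 1 + X * (A ^ 4 + C μ * A ^ 2)) (N : ℕ) :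
    ∑ n ∈ range N, coeff n A * g ^ n ≤ G := by
  have hA2 : ∀ n, 0 ≤ coeff n (A ^ 2) := by rw [sq]; exact coeff_mul_nonneg hA hA
  have hcoeff0 : coeff 0 A = 1 := by
    rw [hSD]
    simp
  have hcoeff (n : ℕ) : coeff (n + 1) A = coeff n (A ^ 4) + μ * coeff n (A ^ 2) := by
    conv_lhs => rw [hSD]
    simp [coeff_succ_X_mul, coeff_C_mul]
  induction N with
  | zero => simpa using hG
  | succ N ih =>
    set P := ∑ n ∈ range N, coeff n A * g ^ n
    have hP : 0 ≤ P := sum_nonneg fun n _ => mul_nonneg (hA n) (pow_nonneg hg n)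
    have hP2 : ∑ n ∈ range N, coeff n (A ^ 2) * g ^ n ≤ P ^ 2 := by
      rw [sq, sq]; exact sum_range_coeff_mul_le hA hA hg N
    have hP4 : ∑ n ∈ range N, coeff n (A ^ 4) * g ^ n ≤ (P ^ 2) ^ 2 := by
      rw [show A ^ 4 = A ^ 2 * A ^ 2 by ring, sq (P ^ 2)]
      exact (sum_range_coeff_mul_le hA2 hA2 hg N).trans
        (mul_self_le_mul_self (sum_nonneg fun n _ => mul_nonneg (hA2 n) (pow_nonneg hg n)) hP2)
    calc ∑ n ∈ range (N + 1), coeff n A * g ^ n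
        = 1 + g * (∑ n ∈ range N, coeff n (A ^ 4) * g ^ n +
            μ * ∑ n ∈ range N, coeff n (A ^ 2) * g ^ n) := by
          rw [sum_range_succ', hcoeff0, pow_zero, mul_one, add_comm, mul_add, mul_sum, mul_sum,
            mul_sum, ← sum_add_distrib]
          refine congrArg _ (sum_congr rfl fun n _ => ?_)
          rw [hcoeff, pow_succ]
          ring
      _ ≤ 1 + g * ((P ^ 2) ^ 2 + μ * P ^ 2) := by gcongr
      _ ≤ 1 + g * ((G ^ 2) ^ 2 + μ * G ^ 2) := by gcongr
      _ = 1 + g * (G ^ 4 + μ * G ^ 2) := by ring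
      _ ≤ G := hfix

theorem PowerSeries.tsum_coeff_mul_pow_eq_of_eq_one_add_X_mul (hA : ∀ n, 0 ≤ coeff n A)
    (hμ : 0 ≤ μ) (hg : 0 ≤ g) {G : ℝ} (hG : 0 ≤ G) (hfix : 1 + g * (G ^ 4 + μ * G ^ 2) ≤ G)
    (hSD : A = 1 + X * (A ^ 4 + C μ * A ^ 2)) :
    ∑' n, coeff n A * g ^ n =
      1 + g * ((∑' n, coeff n A * g ^ n) ^ 4 + μ * (∑' n, coeff n A * g ^ n) ^ 2) := by
  have hA2 : ∀ n, 0 ≤ coeff n (A ^ 2) := by rw [sq]; exact coeff_mul_nonneg hA hA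
  have hS := (summable_of_sum_range_le (fun n => mul_nonneg (hA n) (pow_nonneg hg n))
    (sum_range_coeff_le_of_eq_one_add_X_mul hA hμ hg hG hfix hSD)).hasSum
  set S := ∑' n, coeff n A * g ^ n
  have hS2 : HasSum (fun n => coeff n (A ^ 2) * g ^ n) (S ^ 2) := by
    rw [sq, sq]; exact hasSum_coeff_mul hA hA hg hS hS
  have hS4 : HasSum (fun n => coeff n (A ^ 4) * g ^ n) (S ^ 4) := by
    rw [show A ^ 4 = A ^ 2 * A ^ 2 by ring, show S ^ 4 = S ^ 2 * S ^ 2 by ring]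
    exact hasSum_coeff_mul hA2 hA2 hg hS2 hS2
  have hRHS := hasSum_coeff_one_add_X_mul (F := A ^ 4 + C μ * A ^ 2) (g := g)
    (by simpa [coeff_C_mul, add_mul, mul_assoc] using hS4.add (hS2.mul_left μ))
  rw [← hSD] at hRHS
  exact hS.unique hRHS

end

/-- `[x^m y^q] T^c` for `T = 1 + x T⁴ + y T²`, which by Lagrange inversion is
`(c / N) · N! / (m! q! (N - m - q)!)` with `N = 4m + 2q + c`; the case `c = 0` is separate
because there `N` may vanish. -/
noncomputable def forestCoeff : ℕ → ℕ → ℕ → ℝ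
  | 0, m, q => if m = 0 ∧ q = 0 then 1 else 0
  | c + 1, m, q => (c + 1) * (4 * m + 2 * q + c)! / (m ! * q ! * (3 * m + q + c + 1)!)

theorem forestCoeff_nonneg (c m q : ℕ) : 0 ≤ forestCoeff c m q := by
  cases c <;> unfold forestCoeff <;> positivity

theorem forestCoeff_zero_zero (c : ℕ) : forestCoeff c 0 0 = 1 := by
  cases c with
  | zero => simp [forestCoeff]
  | succ c =>
    simp [forestCoeff, Nat.factorial_succ, Nat.cast_add_one_ne_zero, Nat.factorial_ne_zero]

/-- `N` and `K` are parameters so that callers can present the factorial arguments in a shape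
that `Nat.factorial_succ` rewrites. -/
theorem forestCoeff_eq (c m q N K : ℕ) (hN : N = 4 * m + 2 * q + c) (hK : K = 3 * m + q + c)
    (hN0 : N ≠ 0) : forestCoeff c m q = c * N ! / (N * (m ! * q ! * K !)) := by
  cases c with
  | zero => simp [forestCoeff]; omega
  | succ c =>
    obtain ⟨N, rfl⟩ : ∃ N', N = N' + 1 := ⟨N - 1, by omega⟩
    rw [forestCoeff, show 4 * m + 2 * q + c = N by omega, show 3 * m + q + c + 1 = K by omega,
      Nat.factorial_succ N]
    push_cast
    field_simp

theorem forestCoeff_succ (c m q : ℕ) (h : m + q ≠ 0) : forestCoeff (c + 1) m q =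
    forestCoeff c m q + (if m = 0 then 0 else forestCoeff (c + 4) (m - 1) q) +
      (if q = 0 then 0 else forestCoeff (c + 2) m (q - 1)) := by
  set N := 4 * m + 2 * q + c with hN
  set K := 3 * m + q + c with hK
  rw [forestCoeff_eq _ _ _ (N + 1) (K + 1) (by omega) (by omega) (by omega),
    forestCoeff_eq _ _ _ N K (by omega) (by omega) (by omega)]
  -- clearing denominators leaves `(c + 1) N = c (K + 1) + (c + 4) m + (c + 2) q`
  rcases m with _ | m <;> rcases q with _ | q
  · simp at h
  all_goals
    simp only [add_eq_zero, one_ne_zero, and_false, if_true, if_false,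
      add_tsub_cancel_right]
    repeat rw [forestCoeff_eq _ _ _ N (K + 1) (by omega) (by omega) (by omega)]
    simp only [Nat.factorial_succ]
    push_cast [hN, hK]
    field_simp
    ring

noncomputable def forestSeries (μ : ℝ) (c : ℕ) : PowerSeries ℝ :=
  mk fun n => ∑ p ∈ antidiagonal n, forestCoeff c p.1 p.2 * μ ^ p.2

theorem coeff_forestSeries (μ : ℝ) (c n : ℕ) :
    coeff n (forestSeries μ c) = ∑ p ∈ antidiagonal n, forestCoeff c p.1 p.2 * μ ^ p.2 :=
  coeff_mk _ _

theorem forestSeries_zero (μ : ℝ) : forestSeries μ 0 = 1 := by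
  ext n
  rw [coeff_forestSeries, coeff_one]
  rcases n with _ | n
  · simp [forestCoeff]
  · refine sum_eq_zero fun p hp => ?_
    rw [HasAntidiagonal.mem_antidiagonal] at hp
    simp [forestCoeff]
    omega

theorem forestSeries_succ (μ : ℝ) (c : ℕ) : forestSeries μ (c + 1) =
    forestSeries μ c + X * (forestSeries μ (c + 4) + C μ * forestSeries μ (c + 2)) := by
  ext (_ | n)
  · rw [map_add, coeff_zero_X_mul, coeff_forestSeries, coeff_forestSeries]
    simp [forestCoeff_zero_zero]
  · have key : ∀ p ∈ antidiagonal (n + 1), forestCoeff (c + 1) p.1 p.2 * μ ^ p.2 =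
        forestCoeff c p.1 p.2 * μ ^ p.2 +
          (if p.1 = 0 then 0 else forestCoeff (c + 4) (p.1 - 1) p.2 * μ ^ p.2) +
          μ * (if p.2 = 0 then 0 else forestCoeff (c + 2) p.1 (p.2 - 1) * μ ^ (p.2 - 1)) := by
      rintro ⟨m, q⟩ hp
      rw [HasAntidiagonal.mem_antidiagonal] at hp
      rw [forestCoeff_succ c m q (by omega)]
      rcases q with _ | q
      · simp
      · simp only [add_tsub_cancel_right, add_eq_zero, one_ne_zero, and_false, if_false, pow_succ]
        split_ifs <;> ring
    rw [coeff_forestSeries, sum_congr rfl key, sum_add_distrib, sum_add_distrib, ← mul_sum,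
      sum_antidiagonal_succ_ite_fst (fun m q => forestCoeff (c + 4) m q * μ ^ q),
      sum_antidiagonal_succ_ite_snd (fun m q => forestCoeff (c + 2) m q * μ ^ q)]
    simp [coeff_forestSeries, mul_sum, add_assoc]

theorem forestSeries_add (μ : ℝ) (c d : ℕ) :
    forestSeries μ (c + d) = forestSeries μ c * forestSeries μ d := by
  rw [← sub_eq_zero]
  refine PowerSeries.eq_zero_of_forall_eq_add_X_mul μ
    (fun c => forestSeries μ (c + d) - forestSeries μ c * forestSeries μ d) ?_ (fun c => ?_) c
  · simp [forestSeries_zero]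
  · rw [add_right_comm c 1 d, forestSeries_succ, forestSeries_succ μ c, add_right_comm c 4 d,
      add_right_comm c 2 d]
    ring

theorem forestSeries_eq_pow (μ : ℝ) (c : ℕ) : forestSeries μ c = forestSeries μ 1 ^ c := by
  induction c with
  | zero => simp [forestSeries_zero]
  | succ c ih => rw [forestSeries_add, ih, pow_succ]

theorem forestSeries_one_eq_one_add_X_mul (μ : ℝ) :
    forestSeries μ 1 = 1 + X * (forestSeries μ 1 ^ 4 + C μ * forestSeries μ 1 ^ 2) := by
  rw [← forestSeries_eq_pow, ← forestSeries_eq_pow, ← forestSeries_zero μ]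
  exact forestSeries_succ μ 0

theorem coeff_forestSeries_nonneg {μ : ℝ} (hμ : 0 ≤ μ) (c n : ℕ) :
    0 ≤ coeff n (forestSeries μ c) := by
  rw [coeff_forestSeries]
  exact sum_nonneg fun p _ => mul_nonneg (forestCoeff_nonneg c p.1 p.2) (pow_nonneg hμ p.2)

theorem forestCoeff_one_eq_choose (m q : ℕ) : forestCoeff 1 m q =
    1 / (3 * ((m + q : ℕ) : ℝ) - 2 * q + 1) * (m + q).choose q *
      (4 * (m + q) - 2 * q).choose (m + q) := by
  rw [show 3 * ((m + q : ℕ) : ℝ) - 2 * q + 1 = 3 * m + q + 1 by push_cast; ring,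
    show 4 * (m + q) - 2 * q = 4 * m + 2 * q by omega, Nat.cast_choose ℝ (Nat.le_add_left q m),
    Nat.cast_choose ℝ (show m + q ≤ 4 * m + 2 * q by omega), Nat.add_sub_cancel,
    show 4 * m + 2 * q - (m + q) = 3 * m + q by omega]
  simp only [forestCoeff, CharP.cast_eq_zero, zero_add, one_mul, add_zero,
    Nat.factorial_succ (3 * m + q)]
  push_cast
  field_simp

theorem coeff_forestSeries_one (μ : ℝ) (n : ℕ) : coeff n (forestSeries μ 1) = alphaCoeff μ n := by
  rw [coeff_forestSeries, ← Nat.sum_antidiagonal_swap, alphaCoeff]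
  simp only [Prod.fst_swap, Prod.snd_swap]
  rw [Nat.sum_antidiagonal_eq_sum_range_succ (fun q m => forestCoeff 1 m q * μ ^ q)]
  refine sum_congr rfl fun q hq => ?_
  obtain ⟨m, rfl⟩ : ∃ m, n = m + q := ⟨n - q, by simp at hq; omega⟩
  rw [forestCoeff_one_eq_choose, Nat.add_sub_cancel]
  push_cast
  ring

theorem GLO_satisfies_SD_general (μ : ℝ) (hμ : 0 ≤ μ) (Gc : ℝ) (hGc1 : 1 < Gc)
    (gc : ℝ) (hgc : gc = (Gc - 1) / (Gc ^ 2 * (Gc ^ 2 + μ))) :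
    ∀ g : ℝ, 0 ≤ g → g ≤ gc →
      (∑' n : ℕ, alphaCoeff μ n * g ^ n) =
        1 + g * (∑' n : ℕ, alphaCoeff μ n * g ^ n) ^ 2 *
          ((∑' n : ℕ, alphaCoeff μ n * g ^ n) ^ 2 + μ) := by
  intro g hg hgle
  have hfix : 1 + g * (Gc ^ 4 + μ * Gc ^ 2) ≤ Gc := by
    rw [hgc, le_div_iff₀ (by positivity)] at hgle
    linear_combination hgle
  have hsum := tsum_coeff_mul_pow_eq_of_eq_one_add_X_mul (coeff_forestSeries_nonneg hμ 1) hμ hg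
    (by linarith) hfix (forestSeries_one_eq_one_add_X_mul μ)
  simp only [coeff_forestSeries_one] at hsum
  linear_combination hsum

/-- For `μ ≥ 0` and `0 ≤ g ≤ g_c(μ)`, the sum `S = ∑ α_n(μ) g^n` satisfies the
leading-order Schwinger–Dyson equation `S = 1 + g·S²·(S² + μ)`. -/
theorem GLO_satisfies_SD (μ : ℝ) (hμ : 0 ≤ μ) (Gc : ℝ) (hGc1 : 1 < Gc)
    (hGcRoot : -3 * Gc ^ 3 + 4 * Gc ^ 2 - μ * Gc + 2 * μ = 0)
    (gc : ℝ) (hgc : gc = (Gc - 1) / (Gc ^ 2 * (Gc ^ 2 + μ))) :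
    ∀ g : ℝ, 0 ≤ g → g ≤ gc →
      (∑' n : ℕ, alphaCoeff μ n * g ^ n) =
        1 + g * (∑' n : ℕ, alphaCoeff μ n * g ^ n) ^ 2 *
          ((∑' n : ℕ, alphaCoeff μ n * g ^ n) ^ 2 + μ) :=
  GLO_satisfies_SD_general μ hμ Gc hGc1 gc hgc
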